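/- arXiv:2108.02908 — 2 statements merged into one kernel-verified Lean document; each statement's English description precedes it below -/
import Mathlib

section
/- Let (X_i)_{i ∈ I} be a family of real Banach spaces, 1 ≤ p < ∞, and let X = (⊕_{i∈I} X_i)_{ℓ_p} be their ℓ_p-sum, i.e. the space of all families (x_i) with x_i ∈ X_i and Σ_i ‖x_i‖^p < ∞, normed by ‖(x_i)‖ = (Σ_i ‖x_i‖^p)^{1/p}. If X_{i_0} has the Ball Dentable Property (BDP) for some index i_0 ∈ I, then X has BDP. -/
open Metric Topology Pointwise ENNReal

noncomputable section

/-- The slice `S(B_X, f, α) = {x ∈ B_X : f x > 1 - α}` of the closed unit ball of `X`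
determined by the functional `f` and `α`. -/
def ballSlice (X : Type*) [NormedAddCommGroup X] [NormedSpace ℝ X]
    (f : X →L[ℝ] ℝ) (α : ℝ) : Set X :=
  {x | x ∈ closedBall (0 : X) 1 ∧ 1 - α < f x}

/-- `X` has the Ball Dentable Property: the closed unit ball has slices (determined by
norm-one functionals) of arbitrarily small diameter. -/
def BDP (X : Type*) [NormedAddCommGroup X] [NormedSpace ℝ X] : Prop :=
  ∀ ε > (0 : ℝ), ∃ f : X →L[ℝ] ℝ, ‖f‖ = 1 ∧ ∃ α > (0 : ℝ), diam (ballSlice X f α) < ε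

/-- The weak topology on `X`: the coarsest topology making all continuous linear
functionals continuous. -/
def weakTop (X : Type*) [NormedAddCommGroup X] [NormedSpace ℝ X] : TopologicalSpace X :=
  ⨅ f : X →L[ℝ] ℝ, TopologicalSpace.induced f inferInstance

/-- `X` has the Ball Huskable Property: the closed unit ball has nonempty relatively
weakly open subsets of arbitrarily small diameter. -/
def BHP (X : Type*) [NormedAddCommGroup X] [NormedSpace ℝ X] : Prop :=
  ∀ ε > (0 : ℝ), ∃ V : Set X, IsOpen[weakTop X] V ∧
    (V ∩ closedBall (0 : X) 1).Nonempty ∧ diam (V ∩ closedBall (0 : X) 1) < ε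

/-- `X` has the Ball Small Combination of Slices Property: there are finite convex
combinations of slices of the closed unit ball of arbitrarily small diameter. -/
def BSCSP (X : Type*) [NormedAddCommGroup X] [NormedSpace ℝ X] : Prop :=
  ∀ ε > (0 : ℝ), ∃ (n : ℕ) (f : Fin n → X →L[ℝ] ℝ) (α lam : Fin n → ℝ),
    (∀ i, ‖f i‖ = 1) ∧ (∀ i, 0 < α i) ∧ (∀ i, 0 ≤ lam i) ∧ (∑ i, lam i = 1) ∧
    diam (∑ i, lam i • ballSlice X (f i) (α i)) < ε

/-- The weak* ballSlice `{g ∈ B_{E*} : g e > 1 - α}` of the closed unit ball of the dual of `E`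
determined by `e : E` and `α`. -/
def wstarSlice (E : Type*) [NormedAddCommGroup E] [NormedSpace ℝ E]
    (e : E) (α : ℝ) : Set (E →L[ℝ] ℝ) :=
  {g | g ∈ closedBall (0 : E →L[ℝ] ℝ) 1 ∧ 1 - α < g e}

/-- The dual of `E` has the w*-Ball Dentable Property: the closed unit ball of `E*` has
weak* slices (determined by norm-one elements of `E`) of arbitrarily small diameter. -/
def wstarBDP (E : Type*) [NormedAddCommGroup E] [NormedSpace ℝ E] : Prop :=
  ∀ ε > (0 : ℝ), ∃ e : E, ‖e‖ = 1 ∧ ∃ α > (0 : ℝ), diam (wstarSlice E e α) < ε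

/-- The weak* topology `σ(E*, E)` on the dual of `E`. -/
def wstarTop (E : Type*) [NormedAddCommGroup E] [NormedSpace ℝ E] :
    TopologicalSpace (E →L[ℝ] ℝ) :=
  ⨅ e : E, TopologicalSpace.induced (fun g : E →L[ℝ] ℝ => g e) inferInstance

/-- The dual of `E` has the w*-Ball Huskable Property: the closed unit ball of `E*` has
nonempty relatively weak*-open subsets of arbitrarily small diameter. -/
def wstarBHP (E : Type*) [NormedAddCommGroup E] [NormedSpace ℝ E] : Prop :=
  ∀ ε > (0 : ℝ), ∃ V : Set (E →L[ℝ] ℝ), IsOpen[wstarTop E] V ∧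
    (V ∩ closedBall (0 : E →L[ℝ] ℝ) 1).Nonempty ∧
    diam (V ∩ closedBall (0 : E →L[ℝ] ℝ) 1) < ε

/-- The dual of `E` has the w*-Ball Small Combination of Slices Property: there are finite
convex combinations of weak* slices of the closed unit ball of `E*` of arbitrarily small
diameter. -/
def wstarBSCSP (E : Type*) [NormedAddCommGroup E] [NormedSpace ℝ E] : Prop :=
  ∀ ε > (0 : ℝ), ∃ (n : ℕ) (e : Fin n → E) (α lam : Fin n → ℝ),
    (∀ i, ‖e i‖ = 1) ∧ (∀ i, 0 < α i) ∧ (∀ i, 0 ≤ lam i) ∧ (∑ i, lam i = 1) ∧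
    diam (∑ i, lam i • wstarSlice E (e i) (α i)) < ε

/-! Slice the `ℓ_p`-sum by `f ∘ evalCLM i₀`, where `f` cuts a slice of small diameter from the
unit ball of `X i₀`. A point `x` of the unit ball of the sum lying in this slice has
`‖x i₀‖ > 1 - α`, and since `‖x‖ ^ p = ‖x i₀‖ ^ p + ‖x - single i₀ (x i₀)‖ ^ p ≤ 1` with `p < ∞`,
the rest of `x` is uniformly small once `α` is. So two points of the slice are at distance at most
the diameter of the slice of `X i₀` plus a small error. -/

theorem Real.exists_pos_lt_one_sub_rpow (q : ℝ) {c : ℝ} (hc : c < 1) :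
    ∃ α > 0, α < 1 ∧ c < (1 - α) ^ q := by
  have hcont : ContinuousAt (fun t : ℝ => (1 - t) ^ q) 0 :=
    (Real.continuousAt_rpow_const _ q (by norm_num)).comp
      (continuous_const.sub continuous_id).continuousAt
  have hnear : ∀ᶠ t in 𝓝[>] (0 : ℝ), t < 1 ∧ c < (1 - t) ^ q :=
    nhdsWithin_le_nhds <| (gt_mem_nhds one_pos).and
      (hcont.eventually (lt_mem_nhds (by simpa using hc)))
  obtain ⟨α, ⟨hα1, hαc⟩, hα0⟩ := (hnear.and self_mem_nhdsWithin).exists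
  exact ⟨α, hα0, hα1, hαc⟩

section BallSlice

variable {X Y : Type*} [NormedAddCommGroup X] [NormedSpace ℝ X]
  [NormedAddCommGroup Y] [NormedSpace ℝ Y]

theorem ballSlice_mono {f : X →L[ℝ] ℝ} {α β : ℝ} (h : α ≤ β) :
    ballSlice X f α ⊆ ballSlice X f β :=
  fun _ hx => ⟨hx.1, by linarith [hx.2]⟩

theorem isBounded_ballSlice (f : X →L[ℝ] ℝ) (α : ℝ) : Bornology.IsBounded (ballSlice X f α) :=
  isBounded_closedBall.subset fun _ hx => hx.1

theorem one_sub_lt_norm_of_mem_ballSlice {f : X →L[ℝ] ℝ} (hf : ‖f‖ ≤ 1) {α : ℝ} {x : X}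
    (hx : x ∈ ballSlice X f α) : 1 - α < ‖x‖ :=
  calc 1 - α < f x := hx.2
    _ ≤ ‖f x‖ := le_abs_self _
    _ ≤ ‖f‖ * ‖x‖ := f.le_opNorm x
    _ ≤ ‖x‖ := mul_le_of_le_one_left (norm_nonneg x) hf

theorem mem_ballSlice_of_mem_ballSlice_comp {T : Y →L[ℝ] X} (hT : ‖T‖ ≤ 1) {f : X →L[ℝ] ℝ}
    {α : ℝ} {y : Y} (hy : y ∈ ballSlice Y (f.comp T) α) : T y ∈ ballSlice X f α := by
  refine ⟨mem_closedBall_zero_iff.2 ?_, hy.2⟩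
  calc ‖T y‖ ≤ ‖T‖ * ‖y‖ := T.le_opNorm y
    _ ≤ 1 * 1 := mul_le_mul hT (mem_closedBall_zero_iff.1 hy.1) (norm_nonneg y) zero_le_one
    _ = 1 := one_mul 1

end BallSlice

namespace lp

variable {I : Type*} {X : I → Type*} [∀ i, NormedAddCommGroup (X i)] {p : ℝ≥0∞}

section Single

variable [DecidableEq I]

theorem norm_sub_single_rpow (hp : 0 < p.toReal) (x : lp X p) (i : I) :
    ‖x - lp.single p i (x i)‖ ^ p.toReal = ‖x‖ ^ p.toReal - ‖x i‖ ^ p.toReal := by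
  simpa using lp.norm_compl_sum_single hp x {i}

theorem exists_forall_norm_sub_single_lt [Fact (1 ≤ p)] (hp : p ≠ ∞) (i : I) {η : ℝ}
    (hη : 0 < η) : ∃ α > 0, ∀ x : lp X p, ‖x‖ ≤ 1 → 1 - α < ‖x i‖ →
      ‖x - lp.single p i (x i)‖ < η := by
  have hp0 : 0 < p.toReal :=
    ENNReal.toReal_pos (zero_lt_one.trans_le (Fact.out : (1 : ℝ≥0∞) ≤ p)).ne' hp
  obtain ⟨α, hα0, hα1, hα⟩ :=
    Real.exists_pos_lt_one_sub_rpow p.toReal (sub_lt_self 1 (Real.rpow_pos_of_pos hη _))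
  refine ⟨α, hα0, fun x hx hxi => ?_⟩
  have hx' : ‖x‖ ^ p.toReal ≤ 1 := Real.rpow_le_one (norm_nonneg x) hx hp0.le
  have hxi' : (1 - α) ^ p.toReal ≤ ‖x i‖ ^ p.toReal :=
    Real.rpow_le_rpow (by linarith) hxi.le hp0.le
  rw [← Real.rpow_lt_rpow_iff (norm_nonneg _) hη.le hp0, norm_sub_single_rpow hp0]
  linarith

theorem norm_sub_le_norm_sub_apply_add [Fact (1 ≤ p)] (x y : lp X p) (i : I) :
    ‖x - y‖ ≤ ‖x i - y i‖ + ‖x - lp.single p i (x i)‖ + ‖y - lp.single p i (y i)‖ := by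
  have hp0 : 0 < p := zero_lt_one.trans_le Fact.out
  calc ‖x - y‖
      = ‖lp.single p i (x i - y i) + (x - lp.single p i (x i)) - (y - lp.single p i (y i))‖ := by
        rw [lp.single_sub]; abel_nf
    _ ≤ ‖x i - y i‖ + ‖x - lp.single p i (x i)‖ + ‖y - lp.single p i (y i)‖ := by
        grw [norm_sub_le, norm_add_le, lp.norm_single hp0]

end Single

variable [∀ i, NormedSpace ℝ (X i)] [Fact (1 ≤ p)]

theorem norm_evalCLM_le (i : I) : ‖evalCLM ℝ X p i‖ ≤ 1 :=
  LinearMap.mkContinuous_norm_le _ zero_le_one _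

theorem norm_comp_evalCLM (i : I) (f : X i →L[ℝ] ℝ) : ‖f.comp (evalCLM ℝ X p i)‖ = ‖f‖ := by
  refine le_antisymm ((f.opNorm_comp_le _).trans (mul_le_of_le_one_right (norm_nonneg f)
    (norm_evalCLM_le i))) (f.opNorm_le_bound (norm_nonneg _) fun z => ?_)
  classical
  have hp0 : 0 < p := zero_lt_one.trans_le Fact.out
  calc ‖f z‖ = ‖f.comp (evalCLM ℝ X p i) (lp.single p i z)‖ := by simp [evalCLM]
    _ ≤ ‖f.comp (evalCLM ℝ X p i)‖ * ‖z‖ := by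
        simpa [lp.norm_single hp0] using (f.comp (evalCLM ℝ X p i)).le_opNorm (lp.single p i z)

theorem diam_ballSlice_comp_evalCLM_le [DecidableEq I] {i : I} {f : X i →L[ℝ] ℝ} {α η : ℝ}
    (hη : 0 ≤ η)
    (hconc : ∀ x : lp X p, ‖x‖ ≤ 1 → 1 - α < ‖x i‖ → ‖x - lp.single p i (x i)‖ ≤ η)
    (hf : ‖f‖ ≤ 1) :
    diam (ballSlice (lp X p) (f.comp (evalCLM ℝ X p i)) α) ≤
      diam (ballSlice (X i) f α) + 2 * η := by
  have hslice {x : lp X p} (hx : x ∈ ballSlice (lp X p) (f.comp (evalCLM ℝ X p i)) α) :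
      x i ∈ ballSlice (X i) f α ∧ ‖x - lp.single p i (x i)‖ ≤ η := by
    have hxi := mem_ballSlice_of_mem_ballSlice_comp (norm_evalCLM_le i) hx
    exact ⟨hxi, hconc x (mem_closedBall_zero_iff.1 hx.1)
      (one_sub_lt_norm_of_mem_ballSlice hf hxi)⟩
  refine diam_le_of_forall_dist_le (add_nonneg diam_nonneg (by positivity)) fun x hx y hy => ?_
  obtain ⟨hxi, hxη⟩ := hslice hx
  obtain ⟨hyi, hyη⟩ := hslice hy
  have hdist := dist_le_diam_of_mem (isBounded_ballSlice f α) hxi hyi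
  rw [dist_eq_norm] at hdist ⊢
  linarith [norm_sub_le_norm_sub_apply_add x y i]

end lp

theorem statement5_general (I : Type*) (X : I → Type*) [∀ i, NormedAddCommGroup (X i)]
    [∀ i, NormedSpace ℝ (X i)]
    (p : ℝ≥0∞) [Fact (1 ≤ p)] (hp : p ≠ ∞) (i₀ : I) (h : BDP (X i₀)) :
    BDP (lp X p) := by
  classical
  intro ε hε
  obtain ⟨f, hf, β, hβ, hdiam⟩ := h (ε / 2) (by positivity)
  obtain ⟨α', hα', hconc⟩ := lp.exists_forall_norm_sub_single_lt (X := X) hp i₀ (η := ε / 8)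
    (by positivity)
  refine ⟨f.comp (lp.evalCLM ℝ X p i₀), by rw [lp.norm_comp_evalCLM, hf], min β α',
    lt_min hβ hα', ?_⟩
  have hconc' : ∀ x : lp X p, ‖x‖ ≤ 1 → 1 - min β α' < ‖x i₀‖ →
      ‖x - lp.single p i₀ (x i₀)‖ ≤ ε / 8 := fun x hx hxi =>
    (hconc x hx (by linarith [min_le_right β α'])).le
  calc diam (ballSlice (lp X p) (f.comp (lp.evalCLM ℝ X p i₀)) (min β α'))
      ≤ diam (ballSlice (X i₀) f (min β α')) + 2 * (ε / 8) :=
        lp.diam_ballSlice_comp_evalCLM_le (by positivity) hconc' hf.le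
    _ ≤ diam (ballSlice (X i₀) f β) + 2 * (ε / 8) := by
        gcongr
        exact diam_mono (ballSlice_mono (min_le_left β α')) (isBounded_ballSlice f β)
    _ < ε := by linarith

/-- If some summand `X i₀` of the `ℓ_p`-sum `(⊕ᵢ Xᵢ)_{ℓ_p}` (`1 ≤ p < ∞`) has `BDP`,
then the sum has `BDP`. -/
theorem statement5 (I : Type*) (X : I → Type*) [∀ i, NormedAddCommGroup (X i)]
    [∀ i, NormedSpace ℝ (X i)] [∀ i, CompleteSpace (X i)]
    (p : ℝ≥0∞) [Fact (1 ≤ p)] (hp : p ≠ ∞) (i₀ : I) (h : BDP (X i₀)) :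
    BDP (lp X p) :=
  statement5_general I X p hp i₀ h
end
end

section
/- Let X and Y be real Banach spaces, 1 < p ≤ ∞, and Z = X ⊕_p Y (with norm ‖(x,y)‖ = (‖x‖^p + ‖y‖^p)^{1/p} for p < ∞ and max(‖x‖,‖y‖) for p = ∞). Then the dual Z* has the w*-Ball Dentable Property (w*-BDP) if and only if X* has w*-BDP or Y* has w*-BDP. -/
open Metric Topology Pointwise ENNReal

noncomputable section

/-!
A norm-one `w = (x, y)` of `X ⊕_p Y` is normed by some `f` in the dual unit ball, and
`1 = f w ≤ ‖f ∘ inl‖ ‖x‖ + ‖f ∘ inr‖ ‖y‖`, so one of the two terms, say the first, is at least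
`1/2`. Keeping the `Y`-part of `f` and replacing its `X`-part by `‖f ∘ inl‖ • g`,
with `g` in the weak* slice of `B_{X*}` at `x / ‖x‖`, gives functionals in the weak* slice of
`B_{Z*}` at `w`; hence that slice is at least half as wide, and small slices of `B_{Z*}` give small
slices of `B_{X*}` or of `B_{Y*}`.

Conversely, because `p > 1` the norm of `Z` is flat at `(e, 0)` in the directions of `Y`:
`‖(e, t y)‖ ≤ 1 + η t` for `‖y‖ ≤ 1` and small `t > 0`. So every functional in a thin weak* slice
of `B_{Z*}` at `(e, 0)` has a small `Y`-part, while its `X`-part lies in the slice of `B_{X*}` at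
`e`. The roles of `X` and `Y` are exchanged by the isometry `X ⊕_p Y ≃ Y ⊕_p X`.
-/

namespace ContinuousLinearMap

variable {E : Type*} [NormedAddCommGroup E] [NormedSpace ℝ E]

theorem apply_le_opNorm (f : E →L[ℝ] ℝ) (x : E) : f x ≤ ‖f‖ * ‖x‖ :=
  (le_abs_self _).trans (f.le_opNorm x)

theorem norm_mul_le_of_forall_apply_le (f : E →L[ℝ] ℝ) {r C : ℝ} (hr : 0 ≤ r)
    (h : ∀ x, ‖x‖ ≤ r → f x ≤ C) : ‖f‖ * r ≤ C := by
  have hC : 0 ≤ C := by simpa using h 0 (by simpa using hr)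
  rcases hr.eq_or_lt with rfl | hr
  · simpa using hC
  rw [← le_div_iff₀ hr]
  refine opNorm_le_of_unit_norm (by positivity) fun x hx => ?_
  have hrx : ‖r • x‖ ≤ r := by simp [norm_smul, hx, abs_of_pos hr]
  have h₁ := h _ hrx
  have h₂ := h _ ((norm_neg (r • x)).trans_le hrx)
  simp only [map_neg, map_smul, smul_eq_mul] at h₁ h₂
  rw [Real.norm_eq_abs, le_div_iff₀ hr, show |f x| * r = |r * f x| by rw [abs_mul, abs_of_pos hr, mul_comm]]
  exact abs_le.2 ⟨by linarith, h₁⟩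

end ContinuousLinearMap

theorem Metric.mul_diam_le_of_mapsTo {α β : Type*} [PseudoMetricSpace α] [PseudoMetricSpace β]
    {s : Set α} {t : Set β} {f : α → β} {c : ℝ} (hc : 0 < c) (ht : Bornology.IsBounded t)
    (hst : Set.MapsTo f s t) (hf : ∀ a ∈ s, ∀ b ∈ s, c * dist a b ≤ dist (f a) (f b)) :
    c * diam s ≤ diam t := by
  rw [mul_comm, ← le_div_iff₀ hc]
  refine diam_le_of_forall_dist_le (by positivity) fun a ha b hb => ?_
  rw [le_div_iff₀' hc]
  exact (hf a ha b hb).trans (dist_le_diam_of_mem ht (hst ha) (hst hb))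

namespace WithLp

theorem toLp_fst_add_toLp_snd {p : ℝ≥0∞} {X Y : Type*} [AddCommGroup X] [AddCommGroup Y]
    (z : WithLp p (X × Y)) : toLp p (z.fst, (0 : Y)) + toLp p ((0 : X), z.snd) = z := by
  rw [← toLp_add, Prod.mk_add_mk, add_zero, zero_add]
  rfl

section

variable (p : ℝ≥0∞) {X Y : Type*} [NormedAddCommGroup X] [NormedSpace ℝ X]
  [NormedAddCommGroup Y] [NormedSpace ℝ Y]

def inlL : X →L[ℝ] WithLp p (X × Y) :=
  (prodContinuousLinearEquiv p ℝ X Y).symm.toContinuousLinearMap.comp (.inl ℝ X Y)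

def inrL : Y →L[ℝ] WithLp p (X × Y) :=
  (prodContinuousLinearEquiv p ℝ X Y).symm.toContinuousLinearMap.comp (.inr ℝ X Y)

@[simp] theorem inlL_apply (x : X) : inlL p x = toLp p (x, (0 : Y)) := rfl

@[simp] theorem inrL_apply (y : Y) : inrL p y = toLp p ((0 : X), y) := rfl

end

variable (p : ℝ≥0∞) [Fact (1 ≤ p)] {X Y : Type*} [NormedAddCommGroup X] [NormedAddCommGroup Y]

theorem norm_toLp_le_norm_toLp {x x' : X} (h : ‖x'‖ ≤ ‖x‖) (y : Y) :
    ‖toLp p (x', y)‖ ≤ ‖toLp p (x, y)‖ := by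
  rcases p.dichotomy with rfl | hp
  · simp only [prod_norm_eq_sup, toLp_fst, toLp_snd]
    exact sup_le_sup_right h _
  · have hp₀ : 0 < p.toReal := zero_lt_one.trans_le hp
    simp only [prod_norm_eq_add hp₀, toLp_fst, toLp_snd]
    gcongr

variable [NormedSpace ℝ Y]

theorem exists_norm_toLp_smul_le (hp : 1 < p) {x : X} (hx : ‖x‖ ≤ 1) {η : ℝ} (hη : 0 < η) :
    ∃ t > 0, ∀ y : Y, ‖y‖ ≤ 1 → ‖toLp p (x, t • y)‖ ≤ 1 + η * t := by
  by_cases hp_top : p = ⊤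
  · subst hp_top
    refine ⟨1, one_pos, fun y hy => ?_⟩
    simp only [prod_norm_eq_sup, toLp_fst, toLp_snd, one_smul]
    exact (sup_le hx hy).trans (by linarith)
  have hr : 1 < p.toReal := by
    simpa using (ENNReal.toReal_lt_toReal one_ne_top hp_top).2 hp
  set r := p.toReal
  have hlim : Filter.Tendsto (fun t : ℝ => t ^ (r - 1)) (𝓝 0) (𝓝 0) := by
    simpa [Real.zero_rpow (by linarith : r - 1 ≠ 0)] using
      (Real.continuousAt_rpow_const 0 (r - 1) (Or.inr (by linarith))).tendsto
  have hsmall : ∀ᶠ t in 𝓝[>] (0 : ℝ), t ^ (r - 1) < η ∧ 0 < t :=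
    ((hlim.eventually (gt_mem_nhds hη)).filter_mono nhdsWithin_le_nhds).and self_mem_nhdsWithin
  obtain ⟨t, htη, ht⟩ := hsmall.exists
  refine ⟨t, ht, fun y hy => ?_⟩
  have hty : ‖t • y‖ ≤ t := by
    rw [norm_smul, Real.norm_of_nonneg ht.le]; exact mul_le_of_le_one_right ht.le hy
  calc ‖toLp p (x, t • y)‖ = (‖x‖ ^ r + ‖t • y‖ ^ r) ^ (1 / r) := prod_norm_eq_add (by linarith) _
    _ ≤ (1 + t ^ r) ^ (1 / r) := by
        gcongr
        · exact Real.rpow_le_one (norm_nonneg x) hx (by linarith)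
    _ ≤ 1 + t ^ r := Real.rpow_le_self_of_one_le (le_add_of_nonneg_right (by positivity))
          ((div_le_one (by linarith)).2 hr.le)
    _ = 1 + t ^ (r - 1) * t := by rw [← Real.rpow_add_one ht.ne']; ring_nf
    _ ≤ 1 + η * t := by gcongr

variable [NormedSpace ℝ X]

theorem norm_comp_inlL_le {F : Type*} [NormedAddCommGroup F] [NormedSpace ℝ F]
    (f : WithLp p (X × Y) →L[ℝ] F) : ‖f.comp (inlL p)‖ ≤ ‖f‖ :=
  ContinuousLinearMap.opNorm_le_bound _ (norm_nonneg f) fun x => by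
    simpa using f.le_opNorm (toLp p (x, (0 : Y)))

theorem norm_le_norm_comp_inlL_add_norm_comp_inrL (f : WithLp p (X × Y) →L[ℝ] ℝ) :
    ‖f‖ ≤ ‖f.comp (inlL p)‖ + ‖f.comp (inrL p)‖ := by
  refine ContinuousLinearMap.opNorm_le_bound _ (by positivity) fun z => ?_
  calc ‖f z‖ = ‖f.comp (inlL p) z.fst + f.comp (inrL p) z.snd‖ := by
        conv_lhs => rw [← toLp_fst_add_toLp_snd z]
        rw [map_add]; rfl
    _ ≤ ‖f.comp (inlL p)‖ * ‖z.fst‖ + ‖f.comp (inrL p)‖ * ‖z.snd‖ :=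
        (norm_add_le _ _).trans (add_le_add (ContinuousLinearMap.le_opNorm _ _)
          (ContinuousLinearMap.le_opNorm _ _))
    _ ≤ (‖f.comp (inlL p)‖ + ‖f.comp (inrL p)‖) * ‖z‖ := by
        rw [add_mul]; gcongr <;> [exact norm_fst_le (x := z); exact norm_snd_le (x := z)]

theorem norm_comp_inlL_mul_add_apply_le (f : WithLp p (X × Y) →L[ℝ] ℝ) (z : WithLp p (X × Y)) :
    ‖f.comp (inlL p)‖ * ‖z.fst‖ + f (toLp p (0, z.snd)) ≤ ‖f‖ * ‖z‖ := by
  rw [← le_sub_iff_add_le]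
  refine (f.comp (inlL p)).norm_mul_le_of_forall_apply_le (norm_nonneg _) fun x hx => ?_
  have hfx : f.comp (inlL p) x + f (toLp p (0, z.snd)) = f (toLp p (x, z.snd)) := by
    rw [ContinuousLinearMap.comp_apply, inlL_apply, ← map_add, ← toLp_add]; simp
  calc f.comp (inlL p) x = f (toLp p (x, z.snd)) - f (toLp p (0, z.snd)) := by linarith
    _ ≤ ‖f‖ * ‖z‖ - f (toLp p (0, z.snd)) := by
        gcongr
        calc f (toLp p (x, z.snd)) ≤ ‖f‖ * ‖toLp p (x, z.snd)‖ := f.apply_le_opNorm _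
          _ ≤ ‖f‖ * ‖z‖ := by gcongr; exact norm_toLp_le_norm_toLp p hx z.snd

theorem norm_comp_inrL_le_of_forall_norm_toLp_smul_le {x : X} {t η β : ℝ} (ht : 0 < t)
    (hflat : ∀ y : Y, ‖y‖ ≤ 1 → ‖toLp p (x, t • y)‖ ≤ 1 + η * t)
    {f : WithLp p (X × Y) →L[ℝ] ℝ} (hf : ‖f‖ ≤ 1) (hfx : 1 - β < f (toLp p (x, 0))) :
    ‖f.comp (inrL p)‖ ≤ η + β / t := by
  simpa using (f.comp (inrL p)).norm_mul_le_of_forall_apply_le zero_le_one fun y hy => by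
    have hfy : f (toLp p (x, 0)) + t * f (toLp p (0, y)) ≤ 1 + η * t :=
      calc f (toLp p (x, 0)) + t * f (toLp p (0, y)) = f (toLp p (x, t • y)) := by
            rw [← smul_eq_mul, ← map_smul, ← map_add, ← toLp_smul, ← toLp_add]; simp
        _ ≤ ‖f‖ * ‖toLp p (x, t • y)‖ := f.apply_le_opNorm _
        _ ≤ 1 + η * t := by
            simpa using mul_le_mul hf (hflat y hy) (norm_nonneg _) zero_le_one
    rw [ContinuousLinearMap.comp_apply, inrL_apply, ← mul_le_mul_iff_right₀ ht, mul_add,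
      mul_div_cancel₀ _ ht.ne']
    linarith

end WithLp

section wstarSlice

variable {E F : Type*} [NormedAddCommGroup E] [NormedSpace ℝ E]
  [NormedAddCommGroup F] [NormedSpace ℝ F]

theorem isBounded_wstarSlice (x : E) (α : ℝ) : Bornology.IsBounded (wstarSlice E x α) :=
  isBounded_closedBall.subset fun _ hg => hg.1

theorem diam_wstarSlice_map_le (e : E ≃ₗᵢ[ℝ] F) (x : E) (α : ℝ) :
    diam (wstarSlice F (e x) α) ≤ diam (wstarSlice E x α) := by
  have hnorm (g : F →L[ℝ] ℝ) : ‖g.comp (e : E →L[ℝ] F)‖ = ‖g‖ :=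
    g.opNorm_comp_linearIsometryEquiv e
  simpa using mul_diam_le_of_mapsTo one_pos (isBounded_wstarSlice x α)
    (f := fun g => g.comp (e : E →L[ℝ] F))
    (fun g hg => ⟨by simpa [hnorm] using hg.1, by simpa using hg.2⟩)
    fun g _ g' _ => by simp [dist_eq_norm, ← ContinuousLinearMap.sub_comp, hnorm]

theorem diam_wstarSlice_map (e : E ≃ₗᵢ[ℝ] F) (x : E) (α : ℝ) :
    diam (wstarSlice F (e x) α) = diam (wstarSlice E x α) :=
  (diam_wstarSlice_map_le e x α).antisymm (by simpa using diam_wstarSlice_map_le e.symm (e x) α)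

theorem wstarBDP.of_linearIsometryEquiv (h : wstarBDP E) (e : E ≃ₗᵢ[ℝ] F) : wstarBDP F := by
  intro ε hε
  obtain ⟨x, hx, α, hα, hd⟩ := h ε hε
  exact ⟨e x, by simpa using hx, α, hα, by rwa [diam_wstarSlice_map]⟩

end wstarSlice

section withLpProd

open WithLp

variable (p : ℝ≥0∞) [Fact (1 ≤ p)] {X Y : Type*} [NormedAddCommGroup X] [NormedSpace ℝ X]
  [NormedAddCommGroup Y] [NormedSpace ℝ Y]

theorem norm_comp_inlL_mul_diam_wstarSlice_le {w : WithLp p (X × Y)} (hw : ‖w‖ ≤ 1)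
    {f : WithLp p (X × Y) →L[ℝ] ℝ} (hf : ‖f‖ ≤ 1) (hfw : f w = 1)
    (hpos : 0 < ‖f.comp (inlL p)‖ * ‖w.fst‖) {α : ℝ} (hα : 0 ≤ α) :
    ‖f.comp (inlL p)‖ * diam (wstarSlice X (‖w.fst‖⁻¹ • w.fst) α) ≤
      diam (wstarSlice (WithLp p (X × Y)) w α) := by
  set c := ‖f.comp (inlL p)‖
  set x := w.fst
  have hc : 0 < c := pos_of_mul_pos_left hpos (norm_nonneg x)
  have hcx : c * ‖x‖ ≤ 1 :=
    mul_le_one₀ ((norm_comp_inlL_le p f).trans hf) (norm_nonneg x) ((norm_fst_le X w).trans hw)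
  -- `Φ g` agrees with `f` on `0 × Y` and is `c • g` on `X × 0`
  let Φ : (X →L[ℝ] ℝ) → WithLp p (X × Y) →L[ℝ] ℝ :=
    fun g => c • g.comp (fstL p ℝ X Y) + (f.comp (inrL p)).comp (sndL p ℝ X Y)
  have hΦ (g : X →L[ℝ] ℝ) (z : WithLp p (X × Y)) : Φ g z = c * g z.fst + f (toLp p (0, z.snd)) :=
    rfl
  refine mul_diam_le_of_mapsTo hc (isBounded_wstarSlice w α) (f := Φ) ?_ fun g _ g' _ => ?_
  · rintro g ⟨hg, hgu⟩
    rw [mem_closedBall_zero_iff] at hg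
    refine ⟨mem_closedBall_zero_iff.2 ?_, ?_⟩
    · simpa using (Φ g).norm_mul_le_of_forall_apply_le zero_le_one fun z hz =>
        calc Φ g z ≤ c * ‖z.fst‖ + f (toLp p (0, z.snd)) := by
              rw [hΦ]; gcongr
              exact (g.apply_le_opNorm _).trans (mul_le_of_le_one_left (norm_nonneg _) hg)
          _ ≤ ‖f‖ * ‖z‖ := norm_comp_inlL_mul_add_apply_le p f z
          _ ≤ 1 := mul_le_one₀ hf (norm_nonneg _) hz
    · have hsplit : f (toLp p (x, 0)) + f (toLp p (0, w.snd)) = 1 := by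
        rw [← map_add, toLp_fst_add_toLp_snd, hfw]
      have hfx : f (toLp p (x, 0)) ≤ c * ‖x‖ := (f.comp (inlL p)).apply_le_opNorm x
      have hgx : c * g x = c * ‖x‖ * g (‖x‖⁻¹ • x) := by
        have hx : ‖x‖ ≠ 0 := (pos_of_mul_pos_right hpos hc.le).ne'
        rw [map_smul, smul_eq_mul]
        field_simp
      rw [hΦ]
      linarith [mul_lt_mul_of_pos_left hgu hpos, mul_nonneg (sub_nonneg.2 hcx) hα]
  · rw [dist_eq_norm, dist_eq_norm]
    have hdiff : Φ g - Φ g' = c • (g - g').comp (fstL p ℝ X Y) := by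
      ext z
      simp only [sub_apply, hΦ, smul_apply, ContinuousLinearMap.comp_apply, fstL_apply, smul_eq_mul]
      ring
    have hcomp : ((g - g').comp (fstL p ℝ X Y)).comp (inlL (Y := Y) p) = g - g' := by
      ext; simp
    rw [hdiff, norm_smul, Real.norm_of_nonneg hc.le]
    gcongr
    exact hcomp ▸ norm_comp_inlL_le p ((g - g').comp (fstL p ℝ X Y))

theorem exists_diam_wstarSlice_le_of_half_le {w : WithLp p (X × Y)} (hw : ‖w‖ ≤ 1)
    {f : WithLp p (X × Y) →L[ℝ] ℝ} (hf : ‖f‖ ≤ 1) (hfw : f w = 1)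
    (h : 1 / 2 ≤ ‖f.comp (inlL p)‖ * ‖w.fst‖) {α : ℝ} (hα : 0 ≤ α) :
    ∃ u : X, ‖u‖ = 1 ∧ diam (wstarSlice X u α) ≤ 2 * diam (wstarSlice (WithLp p (X × Y)) w α) := by
  have hx : w.fst ≠ 0 := by
    rintro hx
    rw [hx, norm_zero, mul_zero] at h
    linarith
  have hc : 1 / 2 ≤ ‖f.comp (inlL p)‖ :=
    h.trans (mul_le_of_le_one_right (norm_nonneg _) ((norm_fst_le X w).trans hw))
  refine ⟨‖w.fst‖⁻¹ • w.fst, norm_smul_inv_norm hx, ?_⟩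
  calc diam (wstarSlice X (‖w.fst‖⁻¹ • w.fst) α)
      ≤ 2 * (‖f.comp (inlL p)‖ * diam (wstarSlice X (‖w.fst‖⁻¹ • w.fst) α)) := by
        nlinarith [diam_nonneg (s := wstarSlice X (‖w.fst‖⁻¹ • w.fst) α)]
    _ ≤ 2 * diam (wstarSlice (WithLp p (X × Y)) w α) := by
        gcongr
        exact norm_comp_inlL_mul_diam_wstarSlice_le p hw hf hfw (by linarith) hα

theorem exists_diam_wstarSlice_le_two_mul (w : WithLp p (X × Y)) (hw : ‖w‖ = 1) {α : ℝ}
    (hα : 0 ≤ α) :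
    (∃ u : X, ‖u‖ = 1 ∧ diam (wstarSlice X u α) ≤ 2 * diam (wstarSlice (WithLp p (X × Y)) w α)) ∨
      ∃ v : Y, ‖v‖ = 1 ∧
        diam (wstarSlice Y v α) ≤ 2 * diam (wstarSlice (WithLp p (X × Y)) w α) := by
  obtain ⟨f, hf, hfw⟩ := exists_dual_vector'' ℝ w
  replace hfw : f w = 1 := by simpa [hw] using hfw
  have hsplit : 1 ≤ ‖f.comp (inlL p)‖ * ‖w.fst‖ + ‖f.comp (inrL p)‖ * ‖w.snd‖ :=
    calc 1 = f (toLp p (w.fst, 0)) + f (toLp p (0, w.snd)) := by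
          rw [← map_add, toLp_fst_add_toLp_snd, hfw]
      _ = f.comp (inlL p) w.fst + f.comp (inrL p) w.snd := rfl
      _ ≤ _ := add_le_add ((f.comp _).apply_le_opNorm _) ((f.comp _).apply_le_opNorm _)
  rcases le_or_gt (1 / 2) (‖f.comp (inlL p)‖ * ‖w.fst‖) with h | h
  · exact .inl (exists_diam_wstarSlice_le_of_half_le p hw.le hf hfw h hα)
  · right
    let σ := LinearIsometryEquiv.withLpProdComm p ℝ X Y
    have hσ : (f.comp (σ.symm : WithLp p (Y × X) →L[ℝ] WithLp p (X × Y))).comp (inlL p) =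
        f.comp (inrL p) := by
      ext; simp [σ]
    rw [← diam_wstarSlice_map σ]
    refine exists_diam_wstarSlice_le_of_half_le p (w := σ w)
      (f := f.comp (σ.symm : WithLp p (Y × X) →L[ℝ] WithLp p (X × Y))) (by simpa using hw.le)
      (by rwa [ContinuousLinearMap.opNorm_comp_linearIsometryEquiv]) (by simpa using hfw) ?_ hα
    rw [hσ]
    simp only [σ, LinearIsometryEquiv.withLpProdComm_apply, toLp_fst]
    linarith

theorem wstarBDP.or_of_withLp_prod (h : wstarBDP (WithLp p (X × Y))) :
    wstarBDP X ∨ wstarBDP Y := by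
  by_contra! hXY
  obtain ⟨⟨εX, hεX, hX⟩, ⟨εY, hεY, hY⟩⟩ :
      (∃ ε > 0, ∀ u : X, ‖u‖ = 1 → ∀ α > 0, ε ≤ diam (wstarSlice X u α)) ∧
        ∃ ε > 0, ∀ v : Y, ‖v‖ = 1 → ∀ α > 0, ε ≤ diam (wstarSlice Y v α) := by
    simpa [wstarBDP] using hXY
  obtain ⟨w, hw, α, hα, hd⟩ := h (min εX εY / 2) (by positivity)
  rcases exists_diam_wstarSlice_le_two_mul p w hw hα.le with ⟨u, hu, hdu⟩ | ⟨v, hv, hdv⟩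
  · linarith [hX u hu α hα, min_le_left εX εY]
  · linarith [hY v hv α hα, min_le_right εX εY]

theorem wstarBDP.withLp_prod_left (hp : 1 < p) (h : wstarBDP X) :
    wstarBDP (WithLp p (X × Y)) := by
  intro ε hε
  obtain ⟨e, he, α, hα, hd⟩ := h (ε / 2) (by positivity)
  obtain ⟨t, ht, hflat⟩ :=
    exists_norm_toLp_smul_le (Y := Y) p hp he.le (η := ε / 8) (by positivity)
  set β := min α (t * (ε / 8))
  refine ⟨toLp p (e, 0), by simpa using he, β, by positivity, ?_⟩
  have hslice : ∀ f ∈ wstarSlice (WithLp p (X × Y)) (toLp p (e, 0)) β,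
      f.comp (inlL p) ∈ wstarSlice X e α ∧ ‖f.comp (inrL p)‖ ≤ ε / 4 := by
    rintro f ⟨hf, hfe⟩
    rw [mem_closedBall_zero_iff] at hf
    refine ⟨⟨mem_closedBall_zero_iff.2 ((norm_comp_inlL_le p f).trans hf), ?_⟩, ?_⟩
    · show 1 - α < f (toLp p (e, 0))
      linarith [min_le_left α (t * (ε / 8))]
    · calc ‖f.comp (inrL p)‖ ≤ ε / 8 + β / t :=
            norm_comp_inrL_le_of_forall_norm_toLp_smul_le p ht hflat hf hfe
        _ ≤ ε / 8 + ε / 8 := by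
            have : β / t ≤ ε / 8 := by
              rw [div_le_iff₀ ht]
              linarith [min_le_right α (t * (ε / 8))]
            linarith
        _ = ε / 4 := by ring
  refine (diam_le_of_forall_dist_le (by positivity) fun f hf f' hf' => ?_).trans_lt
    (show diam (wstarSlice X e α) + ε / 2 < ε by linarith)
  obtain ⟨hf₁, hf₂⟩ := hslice f hf
  obtain ⟨hf'₁, hf'₂⟩ := hslice f' hf'
  calc dist f f' ≤ ‖(f - f').comp (inlL p)‖ + ‖(f - f').comp (inrL p)‖ :=
        (dist_eq_norm f f').trans_le (norm_le_norm_comp_inlL_add_norm_comp_inrL p _)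
    _ ≤ dist (f.comp (inlL p)) (f'.comp (inlL p)) + (‖f.comp (inrL p)‖ + ‖f'.comp (inrL p)‖) := by
        rw [dist_eq_norm, ContinuousLinearMap.sub_comp, ContinuousLinearMap.sub_comp]
        gcongr
        exact norm_sub_le _ _
    _ ≤ diam (wstarSlice X e α) + (ε / 4 + ε / 4) := by
        gcongr
        exact dist_le_diam_of_mem (isBounded_wstarSlice e α) hf₁ hf'₁
    _ = diam (wstarSlice X e α) + ε / 2 := by ring

end withLpProd

theorem statement12_general (X Y : Type*) [NormedAddCommGroup X] [NormedSpace ℝ X]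
    [NormedAddCommGroup Y] [NormedSpace ℝ Y]
    (p : ℝ≥0∞) [Fact (1 ≤ p)] (hp : 1 < p) :
    wstarBDP (WithLp p (X × Y)) ↔ wstarBDP X ∨ wstarBDP Y := by
  refine ⟨wstarBDP.or_of_withLp_prod p, ?_⟩
  rintro (hX | hY)
  · exact hX.withLp_prod_left p hp
  · exact (hY.withLp_prod_left p hp).of_linearIsometryEquiv
      (LinearIsometryEquiv.withLpProdComm p ℝ Y X)

/-- For `Z = X ⊕_p Y` (`1 < p ≤ ∞`), `Z*` has `w*-BDP` iff `X*` or `Y*` has `w*-BDP`. -/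
theorem statement12 (X Y : Type*) [NormedAddCommGroup X] [NormedSpace ℝ X] [CompleteSpace X]
    [NormedAddCommGroup Y] [NormedSpace ℝ Y] [CompleteSpace Y]
    (p : ℝ≥0∞) [Fact (1 ≤ p)] (hp : 1 < p) :
    wstarBDP (WithLp p (X × Y)) ↔ wstarBDP X ∨ wstarBDP Y :=
  statement12_general X Y p hp
end
end
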